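/- arXiv:1005.2670 — 3 statements merged into one kernel-verified Lean document; each statement's English description precedes it below -/
import Mathlib

section
/- For every q ≥ −1, the simplicial set [p] ↦ Hom_{Δ_*}([p]_*, [q]_*) (with simplicial structure given by precomposition along the embedding Δ → Δ_*) is contractible: it is simplicially homotopy equivalent to the standard 0-simplex Δ[0] (equivalently, to the constant simplicial set on the one-element set Hom_{Δ_*}([−1]_*, [q]_*)). -/
open CategoryTheory Simplicial Opposite

/-- The category `Δ_*`: `mk n` represents the pointed ordered set `[n-1]_*`, with underlying
set `Fin (n+1)` and basepoint the largest element `Fin.last n`; in particular `mk 0` is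
`[-1]_* = {*}`.  Morphisms are monotone maps sending the basepoint to the basepoint. -/
structure DeltaStar where
  n : ℕ

namespace DeltaStar

instance : Category DeltaStar where
  Hom X Y := { f : Fin (X.n + 1) →o Fin (Y.n + 1) // f (Fin.last X.n) = Fin.last Y.n }
  id X := ⟨OrderHom.id, rfl⟩
  comp f g := ⟨g.1.comp f.1, by simp [OrderHom.comp_coe, f.2, g.2]⟩
  id_comp f := Subtype.ext (OrderHom.comp_id f.1)
  comp_id f := Subtype.ext (OrderHom.id_comp f.1)
  assoc f g h := rfl

/-- The extension of a monotone map `Fin (a+1) → Fin (b+1)` to a pointed monotone map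
on `Fin (a+2) → Fin (b+2)` sending the new largest element to the new largest element. -/
def extendFun {a b : ℕ} (f : Fin (a + 1) →o Fin (b + 1)) : Fin (a + 2) →o Fin (b + 2) where
  toFun := Fin.lastCases (Fin.last (b + 1)) (fun i => (f i).castSucc)
  monotone' := by
    intro x y hxy
    induction y using Fin.lastCases with
    | last => simp [Fin.le_last]
    | cast j =>
      induction x using Fin.lastCases with
      | last => exact absurd hxy (not_le.mpr (Fin.castSucc_lt_last j))
      | cast i =>
        simp only [Fin.lastCases_castSucc]
        exact Fin.castSucc_le_castSucc_iff.mpr (f.monotone (Fin.castSucc_le_castSucc_iff.mp hxy))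

@[simp] lemma extendFun_last {a b : ℕ} (f : Fin (a + 1) →o Fin (b + 1)) :
    extendFun f (Fin.last (a + 1)) = Fin.last (b + 1) :=
  Fin.lastCases_last (motive := fun _ => Fin (b + 2)) ..

@[simp] lemma extendFun_castSucc {a b : ℕ} (f : Fin (a + 1) →o Fin (b + 1)) (i : Fin (a + 1)) :
    extendFun f i.castSucc = (f i).castSucc :=
  Fin.lastCases_castSucc (motive := fun _ => Fin (b + 2)) ..

/-- The (non-full) embedding `Δ → Δ_*`, `[p] ↦ [p]_*`, extending monotone maps by `* ↦ *`. -/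
def iota : SimplexCategory ⥤ DeltaStar where
  obj p := ⟨p.len + 1⟩
  map f := ⟨extendFun f.toOrderHom, by simp [extendFun_last]⟩
  map_id p := by
    apply Subtype.ext; apply OrderHom.ext; funext x
    show extendFun (SimplexCategory.Hom.toOrderHom (𝟙 p)) x = x
    induction x using Fin.lastCases with
    | last => simp [extendFun_last]
    | cast i => simp [extendFun_castSucc]
  map_comp f g := by
    apply Subtype.ext; apply OrderHom.ext; funext x
    show extendFun (SimplexCategory.Hom.toOrderHom (f ≫ g)) x =
      extendFun (SimplexCategory.Hom.toOrderHom g) (extendFun (SimplexCategory.Hom.toOrderHom f) x)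
    induction x using Fin.lastCases with
    | last => simp [extendFun_last]
    | cast i => simp [extendFun_castSucc]

/-- The unique morphism `[-1]_* → X` in `Δ_*`. -/
def fromPoint (X : DeltaStar) : (⟨0⟩ : DeltaStar) ⟶ X :=
  ⟨⟨fun _ => Fin.last X.n, monotone_const⟩, rfl⟩

/-- The unique morphism `X → [-1]_*` in `Δ_*` (everything to the basepoint). -/
def toPoint (X : DeltaStar) : X ⟶ (⟨0⟩ : DeltaStar) :=
  ⟨⟨fun _ => Fin.last 0, monotone_const⟩, rfl⟩

lemma fromPoint_unique {X : DeltaStar} (g : (⟨0⟩ : DeltaStar) ⟶ X) : g = fromPoint X := by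
  apply Subtype.ext; apply OrderHom.ext; funext x
  have hx : x = Fin.last 0 := Fin.ext (by simpa using Nat.lt_one_iff.mp x.isLt)
  rw [hx, g.2]; rfl

lemma toPoint_unique {X : DeltaStar} (g : X ⟶ (⟨0⟩ : DeltaStar)) : g = toPoint X := by
  apply Subtype.ext; apply OrderHom.ext; funext x
  exact Fin.ext (by simpa using Nat.lt_one_iff.mp (g.1 x).isLt)

end DeltaStar

namespace DeltaStar

/-- For a monotone map `α : [a] → [1]`, the underlying map of
`r_α : [a]_* → [a]_*`: the identity on `α⁻¹(0)`, sending `α⁻¹(1)` and `*` to `*`. -/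
def rAlphaFun {a : ℕ} (α : Fin (a + 1) →o Fin 2) : Fin (a + 2) →o Fin (a + 2) where
  toFun := Fin.lastCases (Fin.last (a + 1))
    (fun k => if α k = 1 then Fin.last (a + 1) else k.castSucc)
  monotone' := by
    intro x y hxy
    induction y using Fin.lastCases with
    | last => simp [Fin.le_last]
    | cast j =>
      induction x using Fin.lastCases with
      | last => exact absurd hxy (not_le.mpr (Fin.castSucc_lt_last j))
      | cast i =>
        have hij : i ≤ j := Fin.castSucc_le_castSucc_iff.mp hxy
        simp only [Fin.lastCases_castSucc]
        by_cases h1 : α i = 1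
        · have h2 : α j = 1 := by
            have := α.monotone hij
            rw [h1] at this
            exact le_antisymm (Fin.le_last _) this
          simp [h1, h2]
        · by_cases h2 : α j = 1
          · simp [h1, h2, Fin.le_last]
          · simpa [h1, h2] using hxy

@[simp] lemma rAlphaFun_last {a : ℕ} (α : Fin (a + 1) →o Fin 2) :
    rAlphaFun α (Fin.last (a + 1)) = Fin.last (a + 1) :=
  Fin.lastCases_last (motive := fun _ => Fin (a + 2)) ..

@[simp] lemma rAlphaFun_castSucc {a : ℕ} (α : Fin (a + 1) →o Fin 2) (k : Fin (a + 1)) :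
    rAlphaFun α k.castSucc = if α k = 1 then Fin.last (a + 1) else k.castSucc :=
  Fin.lastCases_castSucc (motive := fun _ => Fin (a + 2)) ..

/-- The morphism `r_α : [p]_* → [p]_*` of `Δ_*` associated with `α ∈ Δ[1]_p`:
the identity on `α⁻¹(0)`, sending `α⁻¹(1)` to `*`. -/
def rAlpha {p : SimplexCategory} (α : p ⟶ SimplexCategory.mk 1) :
    iota.obj p ⟶ iota.obj p :=
  ⟨rAlphaFun α.toOrderHom, by
    show rAlphaFun α.toOrderHom (Fin.last (p.len + 1)) = Fin.last (p.len + 1)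
    simp [rAlphaFun_last]⟩

lemma rAlphaFun_naturality {a b : ℕ} (ψ : Fin (a + 1) →o Fin (b + 1))
    (α : Fin (b + 1) →o Fin 2) (x : Fin (a + 2)) :
    extendFun ψ (rAlphaFun (α.comp ψ) x) = rAlphaFun α (extendFun ψ x) := by
  induction x using Fin.lastCases with
  | last => simp [extendFun_last, rAlphaFun_last]
  | cast i =>
    by_cases h : α (ψ i) = 1 <;>
      simp [extendFun_last, extendFun_castSucc, rAlphaFun_last, rAlphaFun_castSucc, OrderHom.comp_coe, h]

lemma rAlpha_naturality {p q : SimplexCategory} (ψ : p ⟶ q)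
    (α : q ⟶ SimplexCategory.mk 1) :
    rAlpha (ψ ≫ α) ≫ iota.map ψ = iota.map ψ ≫ rAlpha α := by
  apply Subtype.ext; apply OrderHom.ext; funext x
  exact rAlphaFun_naturality ψ.toOrderHom α.toOrderHom x

end DeltaStar

/-- The (pointwise) product of two simplicial sets. -/
def prodSSet (X Y : SSet) : SSet where
  obj m := X.obj m × Y.obj m
  map φ := TypeCat.ofHom (fun x => (X.map φ x.1, Y.map φ x.2))
  map_id m := by ext x <;> simp
  map_comp φ ψ := by ext x <;> simp

/-- The end inclusion `K → K × Δ[1]` at the vertex `j ∈ {0, 1}` of `Δ[1]`. -/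
def endMap (K : SSet) (j : Fin 2) :
    K ⟶ prodSSet K (SSet.stdSimplex.obj (SimplexCategory.mk 1)) where
  app m := TypeCat.ofHom (fun x => (x, ULift.up (SimplexCategory.const m.unop (SimplexCategory.mk 1) j)))
  naturality m m' φ := by
    ext x
    dsimp [prodSSet]
    congr 1

open DeltaStar

variable (Q : DeltaStar)

/-- The simplicial set `[p] ↦ Hom_{Δ_*}([p]_*, [q]_*)` (where `Q = [q]_*`), with simplicial
structure given by precomposition along the embedding `Δ → Δ_*`. -/
def homSSet : SSet := iota.op ⋙ yoneda.obj Q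

/-- The constant simplicial set on the (one-element) set `Hom_{Δ_*}([-1]_*, [q]_*)`. -/
def constHom : SSet :=
  (Functor.const SimplexCategoryᵒᵖ).obj ((⟨0⟩ : DeltaStar) ⟶ Q)

/-- `f : homSSet Q → constHom Q`, precomposition with the unique map `[-1]_* → [p]_*`. -/
def toConst : homSSet Q ⟶ constHom Q where
  app m := TypeCat.ofHom (fun g => fromPoint (iota.obj m.unop) ≫ g)
  naturality m m' φ := by
    ext g
    change iota.obj m.unop ⟶ Q at g
    show fromPoint (iota.obj m'.unop) ≫ (iota.map φ.unop ≫ g)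
        = fromPoint (iota.obj m.unop) ≫ g
    rw [← Category.assoc, fromPoint_unique (fromPoint (iota.obj m'.unop) ≫ iota.map φ.unop)]

/-- `g : constHom Q → homSSet Q`, precomposition with the map `[p]_* → [-1]_*`. -/
def fromConst : constHom Q ⟶ homSSet Q where
  app m := TypeCat.ofHom (fun a => toPoint (iota.obj m.unop) ≫ a)
  naturality m m' φ := by
    ext a
    change (⟨0⟩ : DeltaStar) ⟶ Q at a
    show toPoint (iota.obj m'.unop) ≫ a
        = iota.map φ.unop ≫ (toPoint (iota.obj m.unop) ≫ a)
    rw [← Category.assoc, toPoint_unique (iota.map φ.unop ≫ toPoint (iota.obj m.unop))]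

/-- The simplicial homotopy `H : homSSet Q × Δ[1] → homSSet Q`, given by precomposition
with the maps `r_α : [p]_* → [p]_*`. -/
def homHtpy :
    prodSSet (homSSet Q) (SSet.stdSimplex.obj (SimplexCategory.mk 1)) ⟶ homSSet Q where
  app m := TypeCat.ofHom (fun z => rAlpha z.2.down ≫ z.1)
  naturality m m' φ := by
    ext z
    change (iota.obj m.unop ⟶ Q) × ULift (m.unop ⟶ SimplexCategory.mk 1) at z
    show rAlpha (φ.unop ≫ z.2.down) ≫ (iota.map φ.unop ≫ z.1)
        = iota.map φ.unop ≫ (rAlpha z.2.down ≫ z.1)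
    rw [← Category.assoc, rAlpha_naturality φ.unop z.2.down, Category.assoc]

/-! The maps `r_α` interpolate between the identity of `[p]_*` (for `α ≡ 0`) and the collapse
`[p]_* → [-1]_* → [p]_*` onto the basepoint (for `α ≡ 1`), so precomposing with them contracts
`homSSet Q` onto the image of `constHom Q`. -/

namespace DeltaStar

lemma fromPoint_comp_toPoint (X : DeltaStar) : fromPoint X ≫ toPoint X = 𝟙 _ :=
  (fromPoint_unique _).trans (fromPoint_unique _).symm

lemma rAlpha_const_zero (p : SimplexCategory) :
    rAlpha (SimplexCategory.const p (SimplexCategory.mk 1) 0) = 𝟙 (iota.obj p) := by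
  apply Subtype.ext; apply OrderHom.ext; funext x
  induction x using Fin.lastCases with
  | last => exact rAlphaFun_last _
  | cast i => exact (rAlphaFun_castSucc _ i).trans (if_neg zero_ne_one)

lemma rAlpha_const_one (p : SimplexCategory) :
    rAlpha (SimplexCategory.const p (SimplexCategory.mk 1) 1) =
      toPoint (iota.obj p) ≫ fromPoint (iota.obj p) := by
  apply Subtype.ext; apply OrderHom.ext; funext x
  induction x using Fin.lastCases with
  | last => exact rAlphaFun_last _
  | cast i => exact (rAlphaFun_castSucc _ i).trans (if_pos rfl)

end DeltaStar

lemma fromConst_comp_toConst : fromConst Q ≫ toConst Q = 𝟙 (constHom Q) := by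
  ext m (a : (⟨0⟩ : DeltaStar) ⟶ Q)
  change fromPoint (iota.obj m.unop) ≫ toPoint (iota.obj m.unop) ≫ a = a
  rw [← Category.assoc, fromPoint_comp_toPoint, Category.id_comp]

lemma endMap_zero_comp_homHtpy :
    endMap (homSSet Q) 0 ≫ homHtpy Q = 𝟙 (homSSet Q) := by
  ext m (g : iota.obj m.unop ⟶ Q)
  change rAlpha (SimplexCategory.const m.unop (SimplexCategory.mk 1) 0) ≫ g = g
  rw [rAlpha_const_zero, Category.id_comp]

lemma endMap_one_comp_homHtpy :
    endMap (homSSet Q) 1 ≫ homHtpy Q = toConst Q ≫ fromConst Q := by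
  ext m (g : iota.obj m.unop ⟶ Q)
  change rAlpha (SimplexCategory.const m.unop (SimplexCategory.mk 1) 1) ≫ g =
    toPoint (iota.obj m.unop) ≫ fromPoint (iota.obj m.unop) ≫ g
  rw [rAlpha_const_one, Category.assoc]

/-- For every object `[q]_*` of `Δ_*` (`q ≥ −1`), the simplicial set
`[p] ↦ Hom_{Δ_*}([p]_*, [q]_*)` is contractible: it is simplicially homotopy equivalent to
the constant simplicial set on the one-element set `Hom_{Δ_*}([−1]_*, [q]_*)`
(equivalently, to the standard `0`-simplex `Δ[0]`). -/
theorem homSSet_contractible (Q : DeltaStar) :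
    -- `Hom_{Δ_*}([−1]_*, [q]_*)` is a one-element set:
    (Nonempty ((⟨0⟩ : DeltaStar) ⟶ Q) ∧ ∀ a b : (⟨0⟩ : DeltaStar) ⟶ Q, a = b) ∧
      -- homotopy equivalence with the constant simplicial set:
      fromConst Q ≫ toConst Q = 𝟙 (constHom Q) ∧
      endMap (homSSet Q) 0 ≫ homHtpy Q = 𝟙 (homSSet Q) ∧
      endMap (homSSet Q) 1 ≫ homHtpy Q = toConst Q ≫ fromConst Q :=
  ⟨⟨⟨fromPoint Q⟩, fun a b => (fromPoint_unique a).trans (fromPoint_unique b).symm⟩,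
    fromConst_comp_toConst Q, endMap_zero_comp_homHtpy Q, endMap_one_comp_homHtpy Q⟩
end

section
/- Let M^• be a cosimplicial object in cochain complexes of abelian groups and suppose there is n₀ ∈ ℤ such that H^n(M^p) = 0 for every n ≤ n₀ and every p ≥ 0. Then the product total complex Tot(M^•) is cohomologically bounded from below; precisely, H^n(Tot(M^•)) = 0 for all n ≤ n₀. -/
open CategoryTheory

/-- The degree-`n` part `∏_{p ≥ 0} (M^p)^{n−p}` of the product total complex of a
cosimplicial cochain complex of abelian groups. -/
def Tot (M : CosimplicialObject (CochainComplex AddCommGrpCat ℤ)) (n : ℤ) : Type :=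
  ∀ p : ℕ, ((M.obj (SimplexCategory.mk p)).X (n - (p : ℤ)))

instance (M : CosimplicialObject (CochainComplex AddCommGrpCat ℤ)) (n : ℤ) :
    AddCommGroup (Tot M n) :=
  by unfold Tot; infer_instance

/-- The total differential `Tot(M^•)^n → Tot(M^•)^{n+1}`: in column `p` it is
`(−1)^p` times the internal differential of `M^p` plus the alternating sum
`Σ_{i=0}^{p} (−1)^i δ_i` of the coface maps applied to the column-`(p−1)` component. -/
def totD (M : CosimplicialObject (CochainComplex AddCommGrpCat ℤ)) (n : ℤ) (x : Tot M n) :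
    Tot M (n + 1) := fun p =>
  ((-1 : ℤ) ^ p •
      ((M.obj (SimplexCategory.mk p)).d (n - (p : ℤ)) (n + 1 - (p : ℤ)) (x p))) +
  (match p with
    | 0 => 0
    | q + 1 =>
      cast
        (congrArg (fun t => ((M.obj (SimplexCategory.mk (q + 1))).X t : Type))
          (show n - (q : ℤ) = n + 1 - ((q : ℕ) + 1 : ℕ) by push_cast; ring))
        (∑ i : Fin (q + 2), (-1 : ℤ) ^ (i : ℕ) • ((M.δ i).f (n - (q : ℤ)) (x q))))

/-!
A cocycle `x` of the product total complex is integrated one column at a time (the staircase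
argument). Choose `y₀` with `d y₀ = x₀`. Once `y_p` is chosen, the defect `x_{p+1} - δ y_p` is a
cocycle of column `p + 1`, because `δ` commutes with `d`, `δ ∘ δ = 0` and `x` is a total cocycle;
by exactness of the columns it lifts, up to sign, to some `y_{p+1}`. As `Tot` is a product, the
whole sequence `(y_p)` is an element of it, and by construction its total differential is `x`.
-/

namespace Staircase

/- `A p`, `X p`, `Z p` are the column-`p` pieces of three consecutive total degrees of a double
complex in columns `p ≥ 0`; `d`, `d'` are its vertical and `δ`, `δ'` its horizontal differentials. -/
variable {A X Z : ℕ → Type*} [∀ p, AddCommGroup (A p)] [∀ p, AddCommGroup (X p)]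
  [∀ p, AddCommGroup (Z p)]

def totalDiff (d : ∀ p, A p →+ X p) (δ : ∀ p, A p →+ X (p + 1)) (y : ∀ p, A p) : ∀ p, X p :=
  fun p => (-1 : ℤ) ^ p • d p (y p) +
    match p with
    | 0 => 0
    | q + 1 => δ q (y q)

variable (d : ∀ p, A p →+ X p) (δ : ∀ p, A p →+ X (p + 1)) (x : ∀ p, X p)

def residual (y : ∀ p, A p) : ∀ p, X p
  | 0 => x 0
  | p + 1 => x (p + 1) - δ p (y p)

/-- `Function.invFun` returns a junk value where there is no preimage; `d_lift` shows that this
does not happen when `x` is a total cocycle. -/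
noncomputable def lift : ∀ p, A p
  | 0 => Function.invFun (d 0) (x 0)
  | p + 1 => Function.invFun (d (p + 1)) ((-1 : ℤ) ^ (p + 1) • (x (p + 1) - δ p (lift p)))

lemma lift_eq_invFun (p : ℕ) :
    lift d δ x p = Function.invFun (d p) ((-1 : ℤ) ^ p • residual δ x (lift d δ x) p) := by
  cases p <;> simp [lift, residual]

lemma totalDiff_eq_of_smul_d_eq_residual {y : ∀ p, A p}
    (hy : ∀ p, (-1 : ℤ) ^ p • d p (y p) = residual δ x y p) : totalDiff d δ y = x := by
  funext p
  cases p with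
  | zero => simpa [totalDiff, residual] using hy 0
  | succ p => simp [totalDiff, hy, residual]

lemma neg_one_pow_smul_neg_one_pow_smul {G : Type*} [AddCommGroup G] (p : ℕ) (v : G) :
    (-1 : ℤ) ^ p • (-1 : ℤ) ^ p • v = v := by
  rw [smul_smul, pow_mul_pow_eq_one p (by norm_num), one_smul]

lemma eq_neg_one_pow_smul_of_neg_one_pow_succ_smul_add_eq_zero {G : Type*} [AddCommGroup G]
    {a b : G} (p : ℕ) (h : (-1 : ℤ) ^ (p + 1) • a + b = 0) : a = (-1 : ℤ) ^ p • b := by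
  rw [pow_succ, mul_neg_one, neg_smul, neg_add_eq_zero] at h
  rw [← h, neg_one_pow_smul_neg_one_pow_smul]

variable {d δ} {d' : ∀ p, X p →+ Z p} {δ' : ∀ p, X p →+ Z (p + 1)}
  (hcomm : ∀ p a, d' (p + 1) (δ p a) = δ' p (d p a)) (hsq : ∀ p a, δ' (p + 1) (δ p a) = 0)
  (hexact : ∀ p z, d' p z = 0 → ∃ a, d p a = z)

include hsq in
lemma map_residual (y : ∀ p, A p) (p : ℕ) : δ' p (residual δ x y p) = δ' p (x p) := by
  cases p <;> simp [residual, hsq]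

include hexact in
lemma d_lift {p : ℕ} (h : d' p (residual δ x (lift d δ x) p) = 0) :
    d p (lift d δ x p) = (-1 : ℤ) ^ p • residual δ x (lift d δ x) p := by
  rw [lift_eq_invFun]
  exact Function.invFun_eq (hexact p _ (by rw [map_zsmul, h, smul_zero]))

include hcomm hsq hexact in
lemma map_residual_lift (hx : totalDiff d' δ' x = 0) (p : ℕ) :
    d' p (residual δ x (lift d δ x) p) = 0 := by
  induction p with
  | zero => simpa [totalDiff, residual] using congrFun hx 0
  | succ p ih =>
    have hxp : d' (p + 1) (x (p + 1)) = (-1 : ℤ) ^ p • δ' p (x p) :=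
      eq_neg_one_pow_smul_of_neg_one_pow_succ_smul_add_eq_zero p (congrFun hx (p + 1))
    calc d' (p + 1) (x (p + 1) - δ p (lift d δ x p))
        = d' (p + 1) (x (p + 1)) - δ' p (d p (lift d δ x p)) := by rw [map_sub, hcomm]
      _ = 0 := by rw [d_lift x hexact ih, map_zsmul, map_residual x hsq, hxp, sub_self]

include hcomm hsq hexact in
theorem exists_totalDiff_eq (hx : totalDiff d' δ' x = 0) : ∃ y, totalDiff d δ y = x := by
  refine ⟨lift d δ x, totalDiff_eq_of_smul_d_eq_residual d δ x fun p => ?_⟩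
  rw [d_lift x hexact (map_residual_lift x hcomm hsq hexact hx p),
    neg_one_pow_smul_neg_one_pow_smul]

end Staircase

open AlgebraicTopology

lemma HomologicalComplex.cast_eq_XIsoOfEq_hom {ι : Type*} {c : ComplexShape ι}
    (C : HomologicalComplex AddCommGrpCat c) {i j : ι} (h : i = j) (z : C.X i) :
    cast (congrArg (fun t => (C.X t : Type)) h) z = (C.XIsoOfEq h).hom z := by
  subst h
  rfl

lemma AlgebraicTopology.AlternatingCofaceMapComplex.objD_f_apply {ι : Type*} {c : ComplexShape ι}
    (M : CosimplicialObject (HomologicalComplex AddCommGrpCat c)) (q : ℕ) (m : ι)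
    (z : (M.obj (SimplexCategory.mk q)).X m) :
    (objD M q).f m z = ∑ i : Fin (q + 2), (-1 : ℤ) ^ (i : ℕ) • (M.δ i).f m z := by
  rw [objD, ← HomologicalComplex.Hom.fAddMonoidHom_apply, map_sum]
  simp [← AddCommGrpCat.homAddEquiv_apply]

section TotalComplex

variable (M : CosimplicialObject (CochainComplex AddCommGrpCat ℤ))

noncomputable def totHorizontalD (n : ℤ) (p : ℕ) :
    (M.obj (SimplexCategory.mk p)).X (n - p) ⟶
      (M.obj (SimplexCategory.mk (p + 1))).X (n + 1 - (p + 1 : ℕ)) :=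
  (AlternatingCofaceMapComplex.objD M p).f (n - p) ≫
    (HomologicalComplex.XIsoOfEq _ (by push_cast; ring)).hom

lemma totD_eq_totalDiff (n : ℤ) :
    totD M n = Staircase.totalDiff
      (fun p => ((M.obj (SimplexCategory.mk p)).d (n - p) (n + 1 - p)).hom)
      (fun p => (totHorizontalD M n p).hom) := by
  funext x p
  cases p with
  | zero => rfl
  | succ q =>
    simp only [totD, Staircase.totalDiff, totHorizontalD, ConcreteCategory.comp_apply,
      AlternatingCofaceMapComplex.objD_f_apply]
    exact congrArg _ (HomologicalComplex.cast_eq_XIsoOfEq_hom _ _ _)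

lemma totHorizontalD_comp_d (n : ℤ) (p : ℕ) :
    totHorizontalD M n p ≫ (M.obj (SimplexCategory.mk (p + 1))).d (n + 1 - (p + 1 : ℕ))
      (n + 1 + 1 - (p + 1 : ℕ)) =
    (M.obj (SimplexCategory.mk p)).d (n - p) (n + 1 - p) ≫ totHorizontalD M (n + 1) p := by
  rw [totHorizontalD, totHorizontalD, Category.assoc, HomologicalComplex.XIsoOfEq_hom_comp_d,
    ← HomologicalComplex.Hom.comm_assoc, HomologicalComplex.d_comp_XIsoOfEq_hom]

lemma totHorizontalD_comp_totHorizontalD (n : ℤ) (p : ℕ) :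
    totHorizontalD M n p ≫ totHorizontalD M (n + 1) (p + 1) = 0 := by
  simp only [totHorizontalD, Category.assoc]
  rw [← HomologicalComplex.XIsoOfEq_hom_naturality_assoc, ← HomologicalComplex.comp_f_assoc,
    AlternatingCofaceMapComplex.d_squared]
  simp

end TotalComplex

lemma CochainComplex.exists_d_eq_of_d_eq_zero {C : CochainComplex AddCommGrpCat ℤ} {i j k : ℤ}
    (hij : i + 1 = j) (hjk : j + 1 = k)
    (hC : ∀ z : C.X (i + 1), C.d (i + 1) (i + 2) z = 0 → ∃ y : C.X i, C.d i (i + 1) y = z)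
    (z : C.X j) (hz : C.d j k z = 0) : ∃ y : C.X i, C.d i j y = z := by
  subst hij
  obtain rfl : k = i + 2 := by omega
  exact hC z hz

/-- If there is `n₀ ∈ ℤ` such that `H^n(M^p) = 0` for every `n ≤ n₀` and
every `p ≥ 0`, then `H^n(Tot(M^•)) = 0` for all `n ≤ n₀`; in particular `Tot(M^•)` is
cohomologically bounded from below. -/
theorem tot_cohomology_bounded_below
    (M : CosimplicialObject (CochainComplex AddCommGrpCat ℤ)) (n₀ : ℤ)
    (hM : ∀ (p : ℕ) (n : ℤ), n + 1 ≤ n₀ →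
      ∀ x : (M.obj (SimplexCategory.mk p)).X (n + 1),
        (M.obj (SimplexCategory.mk p)).d (n + 1) (n + 2) x = 0 →
          ∃ y : (M.obj (SimplexCategory.mk p)).X n,
            (M.obj (SimplexCategory.mk p)).d n (n + 1) y = x) :
    ∀ n : ℤ, n + 1 ≤ n₀ → ∀ x : Tot M (n + 1), totD M (n + 1) x = 0 →
      ∃ y : Tot M n, totD M n y = x := by
  intro n hn x hx
  rw [totD_eq_totalDiff] at hx
  obtain ⟨y, hy⟩ := Staircase.exists_totalDiff_eq x
    (fun p a => ConcreteCategory.congr_hom (totHorizontalD_comp_d M n p) a)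
    (fun p a => ConcreteCategory.congr_hom (totHorizontalD_comp_totHorizontalD M n p) a)
    (fun p => CochainComplex.exists_d_eq_of_d_eq_zero (by ring) (by ring)
      (hM p (n - p) (by omega))) hx
  exact ⟨y, by rw [totD_eq_totalDiff]; exact hy⟩
end

section
/- Let A be a (ℤ×ℤ)-graded ring of Tate type (so A(k) = 0 for k > 0 and A(0) = ℤ concentrated in cohomological degree 0). For each integer i ≥ 1 let A_i ⊆ A be the graded additive subgroup whose homogeneous pieces are A_i(k)^n = A(k)^n if k = 0, or if k < 0 and n ≥ ik, and A_i(k)^n = 0 otherwise. Then: each A_i is a subring of A containing the unit; A_i ⊆ A_{i+1} for every i ≥ 1; the union ⋃_{i ≥ 1} A_i equals A; and each A_i is of bounded Tate type, i.e. for every k < 0 the graded piece A_i(k) vanishes in all cohomological degrees n < ik. -/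
/-!
Since `A(0)^n = 0` for `n ≠ 0`, a nonzero element of `A_i(k)^n` has `k ≤ 0` and `i·k ≤ n`, a
condition stable under adding bidegrees; so products of homogeneous elements of `A_i` stay in
`A_i`, and `A_i` is a subring. The `A_i` increase because `i·k` decreases in `i` when `k < 0`.
As `A(k) = 0` for `k > 0`, every homogeneous element of `A(k)^n` lies in `A_{|n|}`, and every
element of `A` is a finite sum of homogeneous ones, so it lies in some `A_i`.
-/

open DirectSum

variable {R : Type} [Ring R]

/-- The homogeneous pieces of the subring `A_i`: `A_i(k)^n = A(k)^n` if `k = 0`, or if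
`k < 0` and `n ≥ i·k`; and `A_i(k)^n = 0` otherwise. -/
def tatePiece (𝒜 : ℤ × ℤ → AddSubgroup R) (i : ℕ) (k n : ℤ) : AddSubgroup R :=
  if k = 0 ∨ (k < 0 ∧ (i : ℤ) * k ≤ n) then 𝒜 (k, n) else ⊥

/-- The graded additive subgroup `A_i ⊆ A` whose homogeneous pieces are `tatePiece 𝒜 i`:
an element belongs to `A_i` iff each of its homogeneous components does. -/
def tateSub (𝒜 : ℤ × ℤ → AddSubgroup R) [GradedRing 𝒜] (i : ℕ) : AddSubgroup R where
  carrier := {r : R | ∀ k n : ℤ, ((DirectSum.decompose 𝒜 r) (k, n) : R) ∈ tatePiece 𝒜 i k n}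
  add_mem' := by
    intro a b ha hb k n
    rw [decompose_add, DFinsupp.add_apply]
    push_cast
    exact add_mem (ha k n) (hb k n)
  zero_mem' := by
    intro k n
    rw [decompose_zero]
    simpa using zero_mem _
  neg_mem' := by
    intro a ha k n
    rw [decompose_neg, DFinsupp.neg_apply]
    push_cast
    exact neg_mem (ha k n)

section TatePiece

variable (𝒜 : ℤ × ℤ → AddSubgroup R) (i : ℕ)

lemma tatePiece_le (k n : ℤ) : tatePiece 𝒜 i k n ≤ 𝒜 (k, n) := by
  unfold tatePiece
  split_ifs
  exacts [le_rfl, bot_le]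

lemma tatePiece_zero_left (n : ℤ) : tatePiece 𝒜 i 0 n = 𝒜 (0, n) :=
  if_pos (Or.inl rfl)

lemma tatePiece_eq_of_nonpos {k n : ℤ} (hk : k ≤ 0) (hn : (i : ℤ) * k ≤ n) :
    tatePiece 𝒜 i k n = 𝒜 (k, n) :=
  if_pos (by omega)

lemma tatePiece_eq_bot_of_lt {k n : ℤ} (hk : k < 0) (hn : n < (i : ℤ) * k) :
    tatePiece 𝒜 i k n = ⊥ :=
  if_neg (by omega)

lemma tatePiece_mono {i j : ℕ} (hij : i ≤ j) (k n : ℤ) :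
    tatePiece 𝒜 i k n ≤ tatePiece 𝒜 j k n := by
  unfold tatePiece
  split_ifs with hi hj
  · exact le_rfl
  · refine absurd ?_ hj
    obtain rfl | ⟨hk, hn⟩ := hi
    · exact Or.inl rfl
    · exact Or.inr ⟨hk, (mul_le_mul_of_nonpos_right (by exact_mod_cast hij) hk.le).trans hn⟩
  all_goals exact bot_le

variable {𝒜} in
lemma nonpos_and_le_of_mem_tatePiece (hzero : ∀ n : ℤ, n ≠ 0 → 𝒜 (0, n) = ⊥)
    {k n : ℤ} {a : R} (ha : a ∈ tatePiece 𝒜 i k n) (ha₀ : a ≠ 0) :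
    k ≤ 0 ∧ (i : ℤ) * k ≤ n := by
  unfold tatePiece at ha
  split_ifs at ha with h
  · obtain rfl | h := h
    · refine ⟨le_rfl, ?_⟩
      by_contra! hn
      rw [hzero n hn.ne] at ha
      exact ha₀ ha
    · exact ⟨h.1.le, h.2⟩
  · exact absurd ha ha₀

variable {𝒜} in
lemma mul_mem_tatePiece [GradedRing 𝒜] (hzero : ∀ n : ℤ, n ≠ 0 → 𝒜 (0, n) = ⊥)
    {k₁ n₁ k₂ n₂ : ℤ} {a b : R} (ha : a ∈ tatePiece 𝒜 i k₁ n₁) (hb : b ∈ tatePiece 𝒜 i k₂ n₂) :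
    a * b ∈ tatePiece 𝒜 i (k₁ + k₂) (n₁ + n₂) := by
  rcases eq_or_ne a 0 with rfl | ha₀
  · simp
  rcases eq_or_ne b 0 with rfl | hb₀
  · simp
  obtain ⟨hk₁, hn₁⟩ := nonpos_and_le_of_mem_tatePiece i hzero ha ha₀
  obtain ⟨hk₂, hn₂⟩ := nonpos_and_le_of_mem_tatePiece i hzero hb hb₀
  rw [tatePiece_eq_of_nonpos 𝒜 i (by omega) (by rw [mul_add]; omega)]
  exact SetLike.mul_mem_graded (tatePiece_le 𝒜 i _ _ ha) (tatePiece_le 𝒜 i _ _ hb)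

end TatePiece

section TateSub

variable (𝒜 : ℤ × ℤ → AddSubgroup R) [GradedRing 𝒜]

variable {𝒜} in
lemma mem_tateSub_of_mem_tatePiece {i : ℕ} {k n : ℤ} {a : R} (ha : a ∈ tatePiece 𝒜 i k n) :
    a ∈ tateSub 𝒜 i := by
  intro k' n'
  have ha' := tatePiece_le 𝒜 i k n ha
  by_cases h : (k, n) = (k', n')
  · obtain ⟨rfl, rfl⟩ := Prod.mk.inj h
    rwa [decompose_of_mem_same 𝒜 ha']
  · rw [decompose_of_mem_ne 𝒜 ha' h]
    exact zero_mem _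

lemma one_mem_tateSub (i : ℕ) : (1 : R) ∈ tateSub 𝒜 i :=
  mem_tateSub_of_mem_tatePiece (k := 0) (n := 0) <| by
    rw [tatePiece_zero_left]
    exact SetLike.one_mem_graded 𝒜

variable {𝒜} in
lemma mul_mem_tateSub (hzero : ∀ n : ℤ, n ≠ 0 → 𝒜 (0, n) = ⊥) {i : ℕ} {x y : R}
    (hx : x ∈ tateSub 𝒜 i) (hy : y ∈ tateSub 𝒜 i) : x * y ∈ tateSub 𝒜 i := by
  classical
  rw [← sum_support_decompose 𝒜 x, ← sum_support_decompose 𝒜 y, Finset.sum_mul_sum]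
  exact sum_mem fun j _ => sum_mem fun j' _ =>
    mem_tateSub_of_mem_tatePiece (mul_mem_tatePiece i hzero (hx j.1 j.2) (hy j'.1 j'.2))

lemma tateSub_mono : Monotone (tateSub 𝒜) :=
  fun _ _ hij _ hx k n => tatePiece_mono 𝒜 hij k n (hx k n)

variable {𝒜} in
lemma mem_tateSub_natAbs_of_mem (hpos : ∀ k n : ℤ, 0 < k → 𝒜 (k, n) = ⊥)
    {k n : ℤ} {a : R} (ha : a ∈ 𝒜 (k, n)) : a ∈ tateSub 𝒜 n.natAbs := by
  apply mem_tateSub_of_mem_tatePiece (k := k) (n := n)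
  rcases lt_trichotomy k 0 with hk | rfl | hk
  · have : (n.natAbs : ℤ) * k ≤ n := by
      rw [Int.natCast_natAbs]
      nlinarith [abs_nonneg n, neg_abs_le n]
    rwa [tatePiece_eq_of_nonpos 𝒜 _ hk.le this]
  · rwa [tatePiece_zero_left]
  · rw [hpos k n hk, AddSubgroup.mem_bot] at ha
    rw [ha]
    exact zero_mem _

variable {𝒜} in
lemma exists_mem_tateSub (hpos : ∀ k n : ℤ, 0 < k → 𝒜 (k, n) = ⊥) (r : R) :
    ∃ i : ℕ, r ∈ tateSub 𝒜 i := by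
  induction r using DirectSum.Decomposition.inductionOn 𝒜 with
  | zero => exact ⟨0, zero_mem _⟩
  | homogeneous m => exact ⟨_, mem_tateSub_natAbs_of_mem hpos m.2⟩
  | add x y hx hy =>
    obtain ⟨i, hx⟩ := hx
    obtain ⟨j, hy⟩ := hy
    exact ⟨max i j, add_mem (tateSub_mono 𝒜 (le_max_left i j) hx)
      (tateSub_mono 𝒜 (le_max_right i j) hy)⟩

end TateSub

theorem tateSub_subring_increasing_union_bounded_general (𝒜 : ℤ × ℤ → AddSubgroup R) [GradedRing 𝒜]
    (hTate₁ : ∀ k i : ℤ, 0 < k → 𝒜 (k, i) = ⊥)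
    (hTate₂ : ∀ i : ℤ, i ≠ 0 → 𝒜 (0, i) = ⊥) :
    (∀ i : ℕ, 1 ≤ i →
        (1 : R) ∈ tateSub 𝒜 i ∧
          ∀ x y : R, x ∈ tateSub 𝒜 i → y ∈ tateSub 𝒜 i → x * y ∈ tateSub 𝒜 i) ∧
      (∀ i : ℕ, 1 ≤ i → tateSub 𝒜 i ≤ tateSub 𝒜 (i + 1)) ∧
      (∀ r : R, ∃ i : ℕ, 1 ≤ i ∧ r ∈ tateSub 𝒜 i) ∧
      (∀ i : ℕ, 1 ≤ i → ∀ k n : ℤ, k < 0 → n < (i : ℤ) * k → tatePiece 𝒜 i k n = ⊥) := by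
  refine ⟨fun i _ => ⟨one_mem_tateSub 𝒜 i, fun _ _ => mul_mem_tateSub hTate₂⟩,
    fun i _ => tateSub_mono 𝒜 i.le_succ, fun r => ?_,
    fun i _ _ _ => tatePiece_eq_bot_of_lt 𝒜 i⟩
  obtain ⟨i, hi⟩ := exists_mem_tateSub hTate₁ r
  exact ⟨i + 1, by omega, tateSub_mono 𝒜 i.le_succ hi⟩

/-- If `A` (with grading `𝒜`) is a `(ℤ × ℤ)`-graded ring of Tate type,
then for every `i ≥ 1`: the graded subgroup `A_i` is a subring of `A` containing the unit;
`A_i ⊆ A_{i+1}`; the union `⋃_{i ≥ 1} A_i` is all of `A`; and each `A_i` is of bounded Tate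
type, i.e. for `k < 0` its piece in Adams degree `k` vanishes in cohomological degrees
`n < i·k`. -/
theorem tateSub_subring_increasing_union_bounded (𝒜 : ℤ × ℤ → AddSubgroup R) [GradedRing 𝒜]
    (hTate₁ : ∀ k i : ℤ, 0 < k → 𝒜 (k, i) = ⊥)
    (hTate₂ : ∀ i : ℤ, i ≠ 0 → 𝒜 (0, i) = ⊥)
    (hTate₃ : 𝒜 (0, 0) = AddSubgroup.zmultiples (1 : R))
    (hTate₄ : Function.Injective fun n : ℤ => n • (1 : R)) :
    (∀ i : ℕ, 1 ≤ i →
        (1 : R) ∈ tateSub 𝒜 i ∧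
          ∀ x y : R, x ∈ tateSub 𝒜 i → y ∈ tateSub 𝒜 i → x * y ∈ tateSub 𝒜 i) ∧
      (∀ i : ℕ, 1 ≤ i → tateSub 𝒜 i ≤ tateSub 𝒜 (i + 1)) ∧
      (∀ r : R, ∃ i : ℕ, 1 ≤ i ∧ r ∈ tateSub 𝒜 i) ∧
      (∀ i : ℕ, 1 ≤ i → ∀ k n : ℤ, k < 0 → n < (i : ℤ) * k → tatePiece 𝒜 i k n = ⊥) :=
  tateSub_subring_increasing_union_bounded_general 𝒜 hTate₁ hTate₂
end
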